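/- Let h : ℝ² × ℝ/ℤ → ℝ be smooth with support contained in ℝ × [−R,R] × ℝ/ℤ for some R > 0, and let H(p,q,t) = ½p² − ½q² + h(p,q,t). Then every 1-periodic solution x(t) = (p(t),q(t)) of the Hamilton equations x' = J∇H(x,t) satisfies |q(t)| < R for all t ∈ ℝ/ℤ. -/

import Mathlib

open Real

open Filter Set Topology

lemma stmt7_aux (f g : ℝ → ℝ) (t₀ c : ℝ) (hc : 0 < c)
    (hmax : ∀ t, f t ≤ f t₀) (hfg : ∀ t, HasDerivAt f (g t) t)
    (hg0 : g t₀ = 0) (hder : HasDerivAt g c t₀) : False := by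
  have hs : Tendsto (slope g t₀) (𝓝[≠] t₀) (𝓝 c) :=
    hasDerivAt_iff_tendsto_slope.mp hder
  have hpos' : ∀ᶠ x in 𝓝[≠] t₀, 0 < slope g t₀ x :=
    hs.eventually (eventually_gt_nhds hc)
  have hpos : ∀ᶠ x in 𝓝[>] t₀, 0 < slope g t₀ x :=
    hpos'.filter_mono (nhdsWithin_mono _ fun x hx => ne_of_gt hx)
  rw [eventually_iff, mem_nhdsGT_iff_exists_Ioo_subset] at hpos
  obtain ⟨u, hu, hsub⟩ := hpos
  have hgpos : ∀ x ∈ Ioo t₀ u, 0 < deriv f x := by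
    intro x hx
    have h1 : 0 < (g x - g t₀) / (x - t₀) := by
      simpa [slope_def_field] using hsub hx
    have hx0 : 0 < x - t₀ := sub_pos.mpr hx.1
    have : 0 < g x - g t₀ := by
      have := mul_pos h1 hx0
      rwa [div_mul_cancel₀] at this
      exact ne_of_gt hx0
    rw [(hfg x).deriv]
    rw [hg0] at this; linarith
  have hcont : Continuous f :=
    continuous_iff_continuousAt.mpr fun x => (hfg x).differentiableAt.continuousAt
  have hmono : StrictMonoOn f (Icc t₀ u) :=
    strictMonoOn_of_deriv_pos (convex_Icc _ _) hcont.continuousOn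
      (fun x hx => hgpos x (by rwa [interior_Icc] at hx))
  have htu : t₀ < u := hu
  have hm : t₀ < (t₀ + u) / 2 := by linarith
  have hm2 : (t₀ + u) / 2 < u := by linarith
  have := hmono (left_mem_Icc.mpr htu.le) ⟨hm.le, hm2.le⟩ hm
  exact absurd (hmax _) (not_le.mpr this)

/-- Let `h : ℝ² × ℝ/ℤ → ℝ` be smooth with support in
`ℝ × [−R,R] × ℝ/ℤ`, and `H(p,q,t) = ½p² − ½q² + h(p,q,t)`. Every 1-periodic
solution `(p(t), q(t))` of the Hamilton equations `p' = q − h_q`, `q' = p + h_p`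
satisfies `|q(t)| < R` for all `t`. -/
theorem stmt7 (R : ℝ) (hR : 0 < R) (h : ℝ → ℝ → ℝ → ℝ)
    (hsmooth : ContDiff ℝ (⊤ : ℕ∞) (fun z : ℝ × ℝ × ℝ => h z.1 z.2.1 z.2.2))
    (hper : ∀ p q t, h p q (t + 1) = h p q t)
    (hsupp : ∀ p q t, R < |q| → h p q t = 0)
    (p q : ℝ → ℝ) (hp : ContDiff ℝ 1 p) (hq : ContDiff ℝ 1 q)
    (hpper : ∀ t, p (t + 1) = p t) (hqper : ∀ t, q (t + 1) = q t)
    (ham1 : ∀ t, deriv p t = q t - deriv (fun u => h (p t) u t) (q t))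
    (ham2 : ∀ t, deriv q t = p t + deriv (fun u => h u (q t) t) (p t)) :
    ∀ t, |q t| < R := by
  set H : ℝ × ℝ × ℝ → ℝ := fun z => h z.1 z.2.1 z.2.2 with hHdef
  have hH : ContDiff ℝ (⊤ : ℕ∞) H := hsmooth
  set D : ℝ × ℝ × ℝ → (ℝ × ℝ × ℝ) →L[ℝ] ℝ := fderiv ℝ H with hDdef
  have hDc : ContDiff ℝ (⊤ : ℕ∞) D := hH.fderiv_right (by simp)
  -- the open set where h vanishes
  set U : Set (ℝ × ℝ × ℝ) := {z | R < |z.2.1|} with hUdef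
  have hUopen : IsOpen U := by
    have : Continuous fun z : ℝ × ℝ × ℝ => |z.2.1| :=
      (continuous_fst.comp continuous_snd).abs
    exact isOpen_Ioi.preimage this
  have hHU : ∀ z ∈ U, H z = 0 := fun z hz => hsupp _ _ _ hz
  -- closure membership
  have hclos : ∀ z : ℝ × ℝ × ℝ, R ≤ |z.2.1| → z ∈ closure U := by
    intro z hz
    rcases le_abs.mp hz with hq1 | hq1
    · refine mem_closure_of_tendsto (f := fun ε : ℝ => (z.1, z.2.1 + ε, z.2.2))
        (b := (𝓝[>] (0:ℝ))) ?_ ?_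
      · have : Tendsto (fun ε : ℝ => (z.1, z.2.1 + ε, z.2.2)) (𝓝 (0:ℝ)) (𝓝 (z.1, z.2.1 + 0, z.2.2)) := by
          apply Continuous.tendsto
          continuity
        simpa using this.mono_left nhdsWithin_le_nhds
      · filter_upwards [self_mem_nhdsWithin] with ε (hε : 0 < ε)
        show R < |z.2.1 + ε|
        have : R < z.2.1 + ε := by linarith
        rw [abs_of_pos (by linarith)]; exact this
    · refine mem_closure_of_tendsto (f := fun ε : ℝ => (z.1, z.2.1 - ε, z.2.2))
        (b := (𝓝[>] (0:ℝ))) ?_ ?_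
      · have : Tendsto (fun ε : ℝ => (z.1, z.2.1 - ε, z.2.2)) (𝓝 (0:ℝ)) (𝓝 (z.1, z.2.1 - 0, z.2.2)) := by
          apply Continuous.tendsto
          continuity
        simpa using this.mono_left nhdsWithin_le_nhds
      · filter_upwards [self_mem_nhdsWithin] with ε (hε : 0 < ε)
        show R < |z.2.1 - ε|
        have h1 : z.2.1 - ε ≤ -R - ε := by linarith
        rw [abs_of_neg (by linarith)]; linarith
  -- vanishing principle
  have vanish : ∀ (E : Type) [NormedAddCommGroup E] [NormedSpace ℝ E]
      (F : ℝ × ℝ × ℝ → E), Continuous F → (∀ z ∈ U, F z = 0) →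
      ∀ z : ℝ × ℝ × ℝ, R ≤ |z.2.1| → F z = 0 := by
    intro E _ _ F hFc hFU z hz
    have : Set.EqOn F (fun _ => (0:E)) (closure U) :=
      (Set.EqOn.closure (fun w hw => hFU w hw) hFc continuous_const)
    exact this (hclos z hz)
  -- D vanishes on {R ≤ |q|}
  have hD0 : ∀ z : ℝ × ℝ × ℝ, R ≤ |z.2.1| → D z = 0 := by
    apply vanish _ _ (hDc.continuous)
    intro z hz
    have hev : H =ᶠ[𝓝 z] (fun _ => (0:ℝ)) := by
      filter_upwards [hUopen.mem_nhds hz] with w hw using hHU w hw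
    rw [hDdef]
    calc fderiv ℝ H z = fderiv ℝ (fun _ => (0:ℝ)) z := hev.fderiv_eq
      _ = 0 := fderiv_const_apply 0
  -- h1 := ∂h/∂p
  set h1 : ℝ × ℝ × ℝ → ℝ := fun z => D z (1, 0, 0) with h1def
  have hh1c : ContDiff ℝ (⊤ : ℕ∞) h1 := hDc.clm_apply contDiff_const
  have hh1fd : ∀ z : ℝ × ℝ × ℝ, R ≤ |z.2.1| → fderiv ℝ h1 z = 0 := by
    apply vanish _ _ ((hh1c.fderiv_right (m := (⊤ : ℕ∞)) (by simp)).continuous)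
    intro z hz
    have hev : h1 =ᶠ[𝓝 z] (fun _ => (0:ℝ)) := by
      filter_upwards [hUopen.mem_nhds hz] with w hw
      rw [h1def]
      simp [hD0 w (le_of_lt hw)]
    calc fderiv ℝ h1 z = fderiv ℝ (fun _ => (0:ℝ)) z := hev.fderiv_eq
      _ = 0 := fderiv_const_apply 0
  -- differentiability of H
  have hHd : Differentiable ℝ H := hH.differentiable (by simp)
  -- identifications of the partial derivatives in ham1/ham2
  have idp : ∀ t, deriv (fun u => h u (q t) t) (p t) = h1 (p t, q t, t) := by
    intro t
    have hφ : HasDerivAt (fun u : ℝ => (u, q t, t)) ((1 : ℝ), (0:ℝ), (0:ℝ)) (p t) :=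
      HasDerivAt.prodMk (hasDerivAt_id (p t)) (HasDerivAt.prodMk (hasDerivAt_const _ _) (hasDerivAt_const _ _))
    have := ((hHd (p t, q t, t)).hasFDerivAt).comp_hasDerivAt (p t) hφ
    exact this.deriv
  have idq : ∀ t, deriv (fun u => h (p t) u t) (q t) = D (p t, q t, t) (0, 1, 0) := by
    intro t
    have hφ : HasDerivAt (fun u : ℝ => (p t, u, t)) ((0 : ℝ), (1:ℝ), (0:ℝ)) (q t) :=
      HasDerivAt.prodMk (hasDerivAt_const _ _) (HasDerivAt.prodMk (hasDerivAt_id (q t)) (hasDerivAt_const _ _))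
    have := ((hHd (p t, q t, t)).hasFDerivAt).comp_hasDerivAt (q t) hφ
    exact this.deriv
  -- deriv q as a nice function
  have hq' : deriv q = fun t => p t + h1 (p t, q t, t) := by
    funext t; rw [ham2 t, idp t]
  -- p and q have derivatives everywhere
  have hpd : ∀ t, HasDerivAt p (deriv p t) t :=
    fun t => ((hp.differentiable (by simp)) t).hasDerivAt
  have hqd : ∀ t, HasDerivAt q (deriv q t) t :=
    fun t => ((hq.differentiable (by simp)) t).hasDerivAt
  -- key: at a point with |q t₀| ≥ R, deriv q has derivative q t₀
  have key : ∀ t₀, R ≤ |q t₀| → HasDerivAt (deriv q) (q t₀) t₀ := by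
    intro t₀ ht₀
    have hγ : HasDerivAt (fun t => ((p t, q t, t) : ℝ × ℝ × ℝ))
        (deriv p t₀, deriv q t₀, 1) t₀ :=
      HasDerivAt.prodMk (hpd t₀) (HasDerivAt.prodMk (hqd t₀) (hasDerivAt_id t₀))
    have hG : HasDerivAt (fun t => h1 (p t, q t, t))
        ((fderiv ℝ h1 (p t₀, q t₀, t₀)) (deriv p t₀, deriv q t₀, 1)) t₀ :=
      (((hh1c.differentiable (by simp)) _).hasFDerivAt).comp_hasDerivAt t₀ hγ
    rw [hh1fd _ ht₀] at hG
    simp only [ContinuousLinearMap.zero_apply] at hG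
    have hsum : HasDerivAt (fun t => p t + h1 (p t, q t, t)) (deriv p t₀ + 0) t₀ :=
      (hpd t₀).add hG
    rw [add_zero] at hsum
    have hder_p : deriv p t₀ = q t₀ := by
      rw [ham1 t₀, idq t₀, hD0 _ ht₀]; simp
    rw [hder_p] at hsum
    rw [hq']
    exact hsum
  -- periodicity gives global extrema
  have hqP : Function.Periodic q 1 := hqper
  obtain ⟨tM, htM, hM⟩ := isCompact_Icc.exists_isMaxOn (Set.nonempty_Icc.mpr zero_le_one)
    (hq.continuous.continuousOn (s := Icc (0:ℝ) 1))
  obtain ⟨tm, htm, hm⟩ := isCompact_Icc.exists_isMinOn (Set.nonempty_Icc.mpr zero_le_one)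
    (hq.continuous.continuousOn (s := Icc (0:ℝ) 1))
  have hMg : ∀ t, q t ≤ q tM := by
    intro t
    obtain ⟨y, hy, hyeq⟩ := hqP.exists_mem_Ico₀ one_pos t
    rw [hyeq]; exact hM (Ico_subset_Icc_self hy)
  have hmg : ∀ t, q tm ≤ q t := by
    intro t
    obtain ⟨y, hy, hyeq⟩ := hqP.exists_mem_Ico₀ one_pos t
    rw [hyeq]; exact hm (Ico_subset_Icc_self hy)
  -- main argument
  intro t
  by_contra hcon
  push_neg at hcon
  rcases le_abs.mp hcon with hc1 | hc1
  · -- q t ≥ R : use max point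
    have hMR : R ≤ q tM := le_trans hc1 (hMg t)
    have habs : R ≤ |q tM| := le_trans hMR (le_abs_self _)
    have hloc : IsLocalMax q tM := by
      apply IsMaxOn.isLocalMax (s := univ)
      · intro x _; exact hMg x
      · exact univ_mem
    have hd0 : deriv q tM = 0 := hloc.deriv_eq_zero
    exact stmt7_aux q (deriv q) tM (q tM) (lt_of_lt_of_le hR hMR)
      hMg hqd hd0 (key tM habs)
  · -- q t ≤ -R : use min point
    have hmR : q tm ≤ -R := le_trans (hmg t) (by linarith)
    have habs : R ≤ |q tm| := by rw [abs_of_neg (by linarith)]; linarith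
    have hloc : IsLocalMin q tm := by
      apply IsMinOn.isLocalMin (s := univ)
      · intro x _; exact hmg x
      · exact univ_mem
    have hd0 : deriv q tm = 0 := hloc.deriv_eq_zero
    have hkey := (key tm habs).neg
    refine stmt7_aux (fun s => -q s) (fun s => -deriv q s) tm (-q tm) (by linarith)
      (fun s => neg_le_neg (hmg s)) (fun s => (hqd s).neg) (by simp [hd0]) hkey
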